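/- arXiv:2111.00034 — 2 statements merged into one kernel-verified Lean document; each statement's English description precedes it below -/
import Mathlib

section
/- Let K₀ : [0,τ]×ℝ^D×ℝ^D → ℝ be continuous with, for each t, K₀(t,·,·) a positive semidefinite kernel; let K∞ be a fixed positive semidefinite kernel whose Gram matrix K∞ ∈ ℝ^{P×P} on the training points x¹,…,x^P is invertible. Suppose the training errors Δ(t) ∈ ℝ^P (with Δ(0) = y − f₀) evolve as Δ'(t) = −ε K₀(t) Δ(t) for t ∈ [0,τ] (K₀(t) the Gram matrix) and Δ'(t) = −h'(t) K∞ Δ(t) for t > τ, where h is C¹, h(τ)=0, h' ≥ 0, h(t) → ∞; and suppose a test prediction f(x,t) evolves as ∂_t f(x,t) = ε k₀(x,t)·Δ(t) for t ≤ τ and ∂_t f(x,t) = h'(t) k∞(x)·Δ(t) for t > τ, where k₀(x,t)^μ = K₀(t,x,x^μ) and k∞(x)^μ = K∞(x,x^μ). Let k₀ := max_{t∈[0,τ]} ‖K₀(t)‖_op and k̃₀ := max_{t∈[0,τ]} ‖k₀(x,t)‖₂. Then the limit f(x,∞) := lim_{t→∞} f(x,t) exists and satisfies |f(x,∞) − f₀(x)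 − k∞(x)ᵀ K∞^{−1} (y − f₀)| ≤ ε τ [ k̃₀ (1 + ε τ k₀) + ‖K∞^{−1} k∞(x)‖₂ k₀ ] ‖y − f₀‖₂; in particular f(x,∞) − f₀(x) = k∞(x)ᵀ K∞^{−1} (y − f₀) + O(ε τ(ε)) as ε → 0 provided ε τ(ε) → 0. -/
open Matrix Filter Set
open scoped Matrix.Norms.L2Operator

/-- The Euclidean (ℓ²) norm of a vector in `ℝ^P`. -/
noncomputable def euclNorm {P : ℕ} (v : Fin P → ℝ) : ℝ :=
  Real.sqrt (∑ i, v i ^ 2)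

/-
In the first phase the kernel Gram matrices are positive semidefinite, so the training error
`Δ` has nonincreasing Euclidean norm; the mean value inequality then shows that `f` and `Δ` move
by at most `ε τ k̃₀ ‖Δ(0)‖` and `ε τ k₀ ‖Δ(0)‖` respectively. In the second phase the kernel is
frozen, so with `w := K∞⁻¹ k∞(x)` the quantity `f(x,t) + w ⬝ Δ(t)` is conserved, while
`Δ(t) = exp(-(h(t) - h(τ)) K∞) Δ(τ) → 0` because `K∞` is positive definite and `h → ∞`.
Hence `f(x,∞) = f(x,τ) + w ⬝ Δ(τ)`, and comparing with `f₀(x) + w ⬝ Δ(0)` gives the estimate.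
-/

open Topology

theorem euclNorm_eq_norm_toLp {P : ℕ} (v : Fin P → ℝ) : euclNorm v = ‖WithLp.toLp 2 v‖ := by
  simp [euclNorm, EuclideanSpace.norm_eq]

theorem euclNorm_nonneg {P : ℕ} (v : Fin P → ℝ) : 0 ≤ euclNorm v := Real.sqrt_nonneg _

theorem euclNorm_eq_sqrt_dotProduct {P : ℕ} (v : Fin P → ℝ) : euclNorm v = √(v ⬝ᵥ v) := by
  simp [euclNorm, dotProduct, sq]

theorem abs_dotProduct_le_euclNorm_mul {P : ℕ} (v w : Fin P → ℝ) :
    |v ⬝ᵥ w| ≤ euclNorm v * euclNorm w := by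
  simpa [euclNorm_eq_norm_toLp, EuclideanSpace.inner_eq_star_dotProduct, dotProduct_comm]
    using abs_real_inner_le_norm (WithLp.toLp 2 v) (WithLp.toLp 2 w)

theorem euclNorm_mulVec_le {P : ℕ} (M : Matrix (Fin P) (Fin P) ℝ) (v : Fin P → ℝ) :
    euclNorm (M *ᵥ v) ≤ ‖M‖ * euclNorm v := by
  simpa [euclNorm_eq_norm_toLp] using M.l2_opNorm_mulVec (WithLp.toLp 2 v)

noncomputable def mulVecCLM (m n : Type*) [Fintype m] [Fintype n] [DecidableEq n] :
    Matrix m n ℝ →L[ℝ] (n → ℝ) →L[ℝ] (m → ℝ) :=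
  LinearMap.toContinuousLinearMap
    (LinearMap.toContinuousLinearMap.toLinearMap ∘ₗ Matrix.mulVecBilin ℝ ℝ)

theorem HasDerivAt.matrix_mulVec {m n : Type*} [Fintype m] [Fintype n] [DecidableEq n]
    {M : ℝ → Matrix m n ℝ} {M' : Matrix m n ℝ} {v : ℝ → n → ℝ} {v' : n → ℝ} {t : ℝ}
    (hM : HasDerivAt M M' t) (hv : HasDerivAt v v' t) :
    HasDerivAt (fun u => M u *ᵥ v u) (M t *ᵥ v' + M' *ᵥ v t) t :=
  (mulVecCLM m n).hasDerivAt_of_bilinear (fun _ => hM) (fun _ => hv)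

theorem HasDerivAt.dotProduct {ι : Type*} [Fintype ι] {v w : ℝ → ι → ℝ} {v' w' : ι → ℝ} {t : ℝ}
    (hv : HasDerivAt v v' t) (hw : HasDerivAt w w' t) :
    HasDerivAt (fun u => v u ⬝ᵥ w u) (v t ⬝ᵥ w' + v' ⬝ᵥ w t) t := by
  have := HasDerivAt.fun_sum (u := Finset.univ) fun i _ =>
    (hasDerivAt_pi.1 hv i).mul (hasDerivAt_pi.1 hw i)
  simpa [_root_.dotProduct, Finset.sum_add_distrib, add_comm, mul_comm] using this

theorem eq_of_hasDerivAt_zero {E : Type*} [NormedAddCommGroup E] [NormedSpace ℝ E]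
    [CompleteSpace E] {g : ℝ → E} {a b : ℝ} (hab : a ≤ b) (hg : ContinuousOn g (Icc a b))
    (hd : ∀ t ∈ Ioo a b, HasDerivAt g 0 t) : g b = g a := by
  have := intervalIntegral.integral_eq_sub_of_hasDerivAt_of_le hab hg hd intervalIntegrable_const
  rw [intervalIntegral.integral_zero] at this
  exact sub_eq_zero.1 this.symm

theorem continuousOn_Ici_of_hasDerivAt {E : Type*} [NormedAddCommGroup E] [NormedSpace ℝ E]
    {g g' : ℝ → E} {d : E} {a : ℝ} (ha : HasDerivAt g d a)
    (hg : ∀ t > a, HasDerivAt g (g' t) t) : ContinuousOn g (Ici a) := fun t ht =>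
  (ht.eq_or_lt.elim (fun hat => hat ▸ ha.continuousAt)
    fun hat => (hg t hat).continuousAt).continuousWithinAt

section Alignment

variable {P : ℕ} {v v' : ℝ → Fin P → ℝ} {a b : ℝ}

theorem euclNorm_le_of_dotProduct_deriv_nonpos (hv : ∀ t ∈ Icc a b, HasDerivAt v (v' t) t)
    (hdiss : ∀ t ∈ Icc a b, v t ⬝ᵥ v' t ≤ 0) {t : ℝ} (ht : t ∈ Icc a b) :
    euclNorm (v t) ≤ euclNorm (v a) := by
  have hsq : AntitoneOn (fun u => v u ⬝ᵥ v u) (Icc a b) :=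
    antitoneOn_of_hasDerivWithinAt_nonpos (convex_Icc a b)
      (f' := fun u => v u ⬝ᵥ v' u + v' u ⬝ᵥ v u)
      (fun u hu => ((hv u hu).dotProduct (hv u hu)).continuousAt.continuousWithinAt)
      (fun u hu => ((hv u (interior_subset hu)).dotProduct
        (hv u (interior_subset hu))).hasDerivWithinAt)
      fun u hu => by
        rw [dotProduct_comm (v' u)]
        linarith [hdiss u (interior_subset hu)]
  rw [euclNorm_eq_sqrt_dotProduct, euclNorm_eq_sqrt_dotProduct]
  exact Real.sqrt_le_sqrt (hsq ⟨le_rfl, ht.1.trans ht.2⟩ ht ht.1)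

theorem euclNorm_sub_le_of_hasDerivAt {M : ℝ} (hab : a ≤ b)
    (hv : ∀ t ∈ Icc a b, HasDerivAt v (v' t) t) (hM : ∀ t ∈ Icc a b, euclNorm (v' t) ≤ M) :
    euclNorm (v b - v a) ≤ M * (b - a) := by
  have hL : ∀ t ∈ Icc a b, HasDerivWithinAt (fun u => WithLp.toLp 2 (v u))
      (WithLp.toLp 2 (v' t)) (Icc a b) t := fun t ht =>
    ((EuclideanSpace.equiv (Fin P) ℝ).symm.hasFDerivAt.comp_hasDerivAt t (hv t ht)).hasDerivWithinAt
  have := Convex.norm_image_sub_le_of_norm_hasDerivWithin_le hL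
    (by simpa only [← euclNorm_eq_norm_toLp] using hM) (convex_Icc a b) (left_mem_Icc.2 hab)
    (right_mem_Icc.2 hab)
  simpa [euclNorm_eq_norm_toLp, Real.norm_eq_abs, abs_of_nonneg (sub_nonneg.2 hab)] using this

variable {ε M : ℝ} {A : ℝ → Matrix (Fin P) (Fin P) ℝ} {Δ : ℝ → Fin P → ℝ}

theorem euclNorm_le_of_hasDerivAt_neg_smul_mulVec (hε : 0 ≤ ε)
    (hA : ∀ t ∈ Icc a b, (A t).PosSemidef)
    (hΔ : ∀ t ∈ Icc a b, HasDerivAt Δ (-(ε • (A t *ᵥ Δ t))) t) {t : ℝ} (ht : t ∈ Icc a b) :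
    euclNorm (Δ t) ≤ euclNorm (Δ a) :=
  euclNorm_le_of_dotProduct_deriv_nonpos hΔ (fun s hs => by
    have := (hA s hs).dotProduct_mulVec_nonneg (Δ s)
    simp only [star_trivial] at this
    simpa [dotProduct_smul] using mul_nonneg hε this) ht

theorem euclNorm_sub_le_of_hasDerivAt_neg_smul_mulVec (hab : a ≤ b) (hε : 0 ≤ ε)
    (hA : ∀ t ∈ Icc a b, (A t).PosSemidef) (hAM : ∀ t ∈ Icc a b, ‖A t‖ ≤ M)
    (hΔ : ∀ t ∈ Icc a b, HasDerivAt Δ (-(ε • (A t *ᵥ Δ t))) t) :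
    euclNorm (Δ b - Δ a) ≤ ε * (b - a) * (M * euclNorm (Δ a)) := by
  have hM : 0 ≤ M := (norm_nonneg _).trans (hAM a (left_mem_Icc.2 hab))
  refine (euclNorm_sub_le_of_hasDerivAt (M := ε * (M * euclNorm (Δ a))) hab hΔ
    fun t ht => ?_).trans_eq (by ring)
  calc euclNorm (-(ε • (A t *ᵥ Δ t))) = ε * euclNorm (A t *ᵥ Δ t) := by
        simp [euclNorm_eq_norm_toLp, norm_smul, abs_of_nonneg hε]
    _ ≤ ε * (M * euclNorm (Δ a)) := by
        gcongr
        exact (euclNorm_mulVec_le _ _).trans (mul_le_mul (hAM t ht)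
          (euclNorm_le_of_hasDerivAt_neg_smul_mulVec hε hA hΔ ht) (euclNorm_nonneg _) hM)

theorem abs_sub_le_of_hasDerivAt_smul_dotProduct {f : ℝ → ℝ} {k : ℝ → Fin P → ℝ} (hab : a ≤ b)
    (hε : 0 ≤ ε) (hA : ∀ t ∈ Icc a b, (A t).PosSemidef)
    (hΔ : ∀ t ∈ Icc a b, HasDerivAt Δ (-(ε • (A t *ᵥ Δ t))) t)
    (hkM : ∀ t ∈ Icc a b, euclNorm (k t) ≤ M)
    (hf : ∀ t ∈ Icc a b, HasDerivAt f (ε * (k t ⬝ᵥ Δ t)) t) :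
    |f b - f a| ≤ ε * (b - a) * (M * euclNorm (Δ a)) := by
  have hM : 0 ≤ M := (euclNorm_nonneg _).trans (hkM a (left_mem_Icc.2 hab))
  have := Convex.norm_image_sub_le_of_norm_hasDerivWithin_le
    (fun t ht => (hf t ht).hasDerivWithinAt) (fun t ht => ?_) (convex_Icc a b)
    (left_mem_Icc.2 hab) (right_mem_Icc.2 hab) (C := ε * (M * euclNorm (Δ a)))
  · simpa [Real.norm_eq_abs, abs_of_nonneg (sub_nonneg.2 hab), mul_assoc, mul_comm,
      mul_left_comm] using this
  rw [Real.norm_eq_abs, abs_mul, abs_of_nonneg hε]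
  gcongr
  exact (abs_dotProduct_le_euclNorm_mul _ _).trans (mul_le_mul (hkM t ht)
    (euclNorm_le_of_hasDerivAt_neg_smul_mulVec hε hA hΔ ht) (euclNorm_nonneg _) hM)

theorem abs_sub_add_dotProduct_sub_le {f : ℝ → ℝ} {k : ℝ → Fin P → ℝ} {N : ℝ} (w : Fin P → ℝ)
    (hab : a ≤ b) (hε : 0 ≤ ε) (hA : ∀ t ∈ Icc a b, (A t).PosSemidef)
    (hAM : ∀ t ∈ Icc a b, ‖A t‖ ≤ M) (hkN : ∀ t ∈ Icc a b, euclNorm (k t) ≤ N)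
    (hΔ : ∀ t ∈ Icc a b, HasDerivAt Δ (-(ε • (A t *ᵥ Δ t))) t)
    (hf : ∀ t ∈ Icc a b, HasDerivAt f (ε * (k t ⬝ᵥ Δ t)) t) :
    |(f b - f a) + w ⬝ᵥ (Δ b - Δ a)| ≤
      ε * (b - a) * (N * euclNorm (Δ a)) + euclNorm w * (ε * (b - a) * (M * euclNorm (Δ a))) :=
  calc |(f b - f a) + w ⬝ᵥ (Δ b - Δ a)|
      ≤ |f b - f a| + euclNorm w * euclNorm (Δ b - Δ a) :=
        (abs_add_le _ _).trans (add_le_add le_rfl (abs_dotProduct_le_euclNorm_mul _ _))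
    _ ≤ _ := add_le_add (abs_sub_le_of_hasDerivAt_smul_dotProduct hab hε hA hΔ hkN hf)
        (mul_le_mul_of_nonneg_left
          (euclNorm_sub_le_of_hasDerivAt_neg_smul_mulVec hab hε hA hAM hΔ) (euclNorm_nonneg w))

end Alignment

section ScaleGrowth

variable {n : Type*} [Fintype n] {G : Matrix n n ℝ} {c C : ℝ → ℝ} {v : ℝ → n → ℝ} {a b : ℝ}

theorem add_dotProduct_eq_of_hasDerivAt {f : ℝ → ℝ} {w : n → ℝ} (hab : a ≤ b)
    (hfc : ContinuousOn f (Icc a b)) (hvc : ContinuousOn v (Icc a b))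
    (hv : ∀ t ∈ Ioo a b, HasDerivAt v (-(c t • (G *ᵥ v t))) t)
    (hf : ∀ t ∈ Ioo a b, HasDerivAt f (c t * ((w ᵥ* G) ⬝ᵥ v t)) t) :
    f b + w ⬝ᵥ v b = f a + w ⬝ᵥ v a := by
  refine eq_of_hasDerivAt_zero (g := fun u => f u + w ⬝ᵥ v u) hab
    (hfc.add ((continuous_const.dotProduct continuous_id).comp_continuousOn hvc)) fun t ht => ?_
  refine ((hf t ht).add (HasDerivAt.dotProduct (hasDerivAt_const t w) (hv t ht))).congr_deriv ?_
  simp [dotProduct_mulVec]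

variable [DecidableEq n]

theorem Matrix.IsHermitian.exp_smul_eq (hG : G.IsHermitian) (s : ℝ) :
    NormedSpace.exp (s • G) = (hG.eigenvectorUnitary : Matrix n n ℝ)
        * diagonal (fun k => Real.exp (s * hG.eigenvalues k))
        * star (hG.eigenvectorUnitary : Matrix n n ℝ) := by
  set U := (hG.eigenvectorUnitary : Matrix n n ℝ)
  have hUU : star U * U = 1 := Unitary.coe_star_mul_self _
  have hUinv : U⁻¹ = star U := Matrix.inv_eq_left_inv hUU
  have hsG : s • G = U * diagonal (fun k => s * hG.eigenvalues k) * U⁻¹ := by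
    conv_lhs => rw [hG.spectral_theorem]
    rw [Unitary.conjStarAlgAut_apply, hUinv, ← smul_mul_assoc, ← mul_smul_comm,
      ← diagonal_smul]
    rfl
  rw [hsG, Matrix.exp_conj _ _ (.of_mul_eq_one _ (Unitary.coe_mul_star_self _)),
    Matrix.exp_diagonal, hUinv]
  simp only [Pi.exp_def, Real.exp_eq_exp_ℝ]
  rfl

theorem Matrix.PosDef.tendsto_exp_neg_smul (hG : G.PosDef) :
    Tendsto (fun s : ℝ => NormedSpace.exp (-s • G)) atTop (𝓝 0) := by
  set U := (hG.1.eigenvectorUnitary : Matrix n n ℝ)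
  have hdecay : Tendsto (fun s : ℝ => fun k => Real.exp (-s * hG.1.eigenvalues k)) atTop (𝓝 0) :=
    tendsto_pi_nhds.2 fun k => by
      simpa [Function.comp_def, neg_mul] using Real.tendsto_exp_neg_atTop_nhds_zero.comp
        (tendsto_id.atTop_mul_const (hG.eigenvalues_pos k))
  have hconj : Continuous fun d : n → ℝ => U * diagonal d * star U :=
    (continuous_const.mul continuous_id.matrix_diagonal).mul continuous_const
  have hlim := (hconj.tendsto 0).comp hdecay
  simp only [Function.comp_def, diagonal_zero', mul_zero, zero_mul] at hlim
  simpa only [hG.1.exp_smul_eq] using hlim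

theorem mulVec_eq_exp_smul_mulVec_of_hasDerivAt (hab : a ≤ b)
    (hC : ∀ t ∈ Icc a b, HasDerivAt C (c t) t) (hvc : ContinuousOn v (Icc a b))
    (hv : ∀ t ∈ Ioo a b, HasDerivAt v (-(c t • (G *ᵥ v t))) t) :
    v b = NormedSpace.exp ((C a - C b) • G) *ᵥ v a := by
  have hE : ∀ t ∈ Icc a b, HasDerivAt (fun u => NormedSpace.exp (C u • G))
      (c t • (NormedSpace.exp (C t • G) * G)) t :=
    fun t ht => (hasDerivAt_exp_smul_const G (C t)).scomp t (hC t ht)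
  have hconst : NormedSpace.exp (C b • G) *ᵥ v b = NormedSpace.exp (C a • G) *ᵥ v a := by
    refine eq_of_hasDerivAt_zero (g := fun u => NormedSpace.exp (C u • G) *ᵥ v u) hab
      (fun t ht => ?_) fun t ht => ?_
    · exact (mulVecCLM n n).continuous₂.continuousAt.comp_continuousWithinAt
        ((hE t ht).continuousAt.continuousWithinAt.prodMk (hvc t ht))
    · refine ((hE t (Ioo_subset_Icc_self ht)).matrix_mulVec (hv t ht)).congr_deriv ?_
      simp [mulVec_neg, mulVec_smul, smul_mulVec, mulVec_mulVec]
  have hexp_add : ∀ x y : ℝ, NormedSpace.exp (x • G) * NormedSpace.exp (y • G)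
      = NormedSpace.exp ((x + y) • G) := fun x y => by
    rw [add_smul, Matrix.exp_add_of_commute _ _ (((Commute.refl G).smul_left x).smul_right y)]
  calc v b = NormedSpace.exp ((-C b + C b) • G) *ᵥ v b := by simp
    _ = NormedSpace.exp (-C b • G) *ᵥ (NormedSpace.exp (C b • G) *ᵥ v b) := by
      rw [mulVec_mulVec, hexp_add]
    _ = NormedSpace.exp ((C a - C b) • G) *ᵥ v a := by
      rw [hconst, mulVec_mulVec, hexp_add, neg_add_eq_sub]

theorem tendsto_add_dotProduct_of_hasDerivAt {f : ℝ → ℝ} {w : n → ℝ} (hG : G.PosDef)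
    (hC : ∀ t ≥ a, HasDerivAt C (c t) t) (hCtop : Tendsto C atTop atTop)
    (hfc : ContinuousOn f (Ici a)) (hvc : ContinuousOn v (Ici a))
    (hv : ∀ t > a, HasDerivAt v (-(c t • (G *ᵥ v t))) t)
    (hf : ∀ t > a, HasDerivAt f (c t * ((w ᵥ* G) ⬝ᵥ v t)) t) :
    Tendsto f atTop (𝓝 (f a + w ⬝ᵥ v a)) := by
  have hexp : Tendsto (fun t => NormedSpace.exp ((C a - C t) • G)) atTop (𝓝 0) := by
    have hgrowth : Tendsto (fun t => C t - C a) atTop atTop := by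
      simpa only [sub_eq_add_neg] using tendsto_atTop_add_const_right _ (-C a) hCtop
    simpa only [Function.comp_def, neg_sub] using hG.tendsto_exp_neg_smul.comp hgrowth
  have hv0 : Tendsto (fun t => NormedSpace.exp ((C a - C t) • G) *ᵥ v a) atTop (𝓝 0) := by
    simpa [Function.comp_def] using
      ((continuous_id.matrix_mulVec continuous_const).tendsto 0).comp hexp
  have hlim : Tendsto
      (fun t => f a + w ⬝ᵥ v a - w ⬝ᵥ (NormedSpace.exp ((C a - C t) • G) *ᵥ v a)) atTop
      (𝓝 (f a + w ⬝ᵥ v a)) := by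
    simpa using tendsto_const_nhds.sub
      (((continuous_const.dotProduct continuous_id).tendsto 0).comp hv0)
  refine hlim.congr' ((eventually_ge_atTop a).mono fun t ht => ?_)
  rw [← mulVec_eq_exp_smul_mulVec_of_hasDerivAt ht (fun s hs => hC s hs.1)
    (hvc.mono Icc_subset_Ici_self) fun s hs => hv s hs.1]
  rw [← add_dotProduct_eq_of_hasDerivAt ht (hfc.mono Icc_subset_Ici_self)
    (hvc.mono Icc_subset_Ici_self) (fun s hs => hv s hs.1) fun s hs => hf s hs.1]
  ring

end ScaleGrowth

theorem stmt5_general {D P : ℕ}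
    (τ ε : ℝ) (hτ : 0 ≤ τ) (hε : 0 < ε)
    (K₀ : ℝ → (Fin D → ℝ) → (Fin D → ℝ) → ℝ)
    (hK₀psd : ∀ t ∈ Set.Icc (0 : ℝ) τ, ∀ (m : ℕ) (z : Fin m → Fin D → ℝ),
      Matrix.PosSemidef (Matrix.of fun i j => K₀ t (z i) (z j)))
    (Kinf : (Fin D → ℝ) → (Fin D → ℝ) → ℝ)
    (hKinfpsd : ∀ (m : ℕ) (z : Fin m → Fin D → ℝ),
      Matrix.PosSemidef (Matrix.of fun i j => Kinf (z i) (z j)))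
    (X : Fin P → Fin D → ℝ)
    (Ginf : Matrix (Fin P) (Fin P) ℝ)
    (hGinf : Ginf = Matrix.of fun μ ν => Kinf (X μ) (X ν))
    (hGinv : IsUnit Ginf.det)
    (y f₀ : Fin P → ℝ)
    (Δ : ℝ → Fin P → ℝ) (hΔ0 : Δ 0 = y - f₀)
    (h h' : ℝ → ℝ)
    (hh : ∀ t ≥ τ, HasDerivAt h (h' t) t)
    (hhtop : Tendsto h atTop atTop)
    (hΔ1 : ∀ t ∈ Set.Icc (0 : ℝ) τ,
      HasDerivAt Δ (-(ε • ((Matrix.of fun μ ν => K₀ t (X μ) (X ν)) *ᵥ Δ t))) t)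
    (hΔ2 : ∀ t > τ, HasDerivAt Δ (-(h' t • (Ginf *ᵥ Δ t))) t)
    (x : Fin D → ℝ) (f : ℝ → ℝ) (f₀x : ℝ) (hf0 : f 0 = f₀x)
    (hf1 : ∀ t ∈ Set.Icc (0 : ℝ) τ,
      HasDerivAt f (ε * ((fun μ => K₀ t x (X μ)) ⬝ᵥ Δ t)) t)
    (hf2 : ∀ t > τ, HasDerivAt f (h' t * ((fun μ => Kinf x (X μ)) ⬝ᵥ Δ t)) t)
    (k0max : ℝ)
    (hk0max : IsGreatest
      ((fun t => ‖(Matrix.of fun μ ν => K₀ t (X μ) (X ν) : Matrix (Fin P) (Fin P) ℝ)‖) ''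
        Set.Icc (0 : ℝ) τ) k0max)
    (kt0 : ℝ)
    (hkt0 : IsGreatest
      ((fun t => euclNorm fun μ => K₀ t x (X μ)) '' Set.Icc (0 : ℝ) τ) kt0) :
    ∃ flim : ℝ, Tendsto f atTop (nhds flim) ∧
      |flim - f₀x - (fun μ => Kinf x (X μ)) ⬝ᵥ (Ginf⁻¹ *ᵥ (y - f₀))| ≤
        ε * τ * (kt0 * (1 + ε * τ * k0max)
            + euclNorm (Ginf⁻¹ *ᵥ fun μ => Kinf x (X μ)) * k0max)
          * euclNorm (y - f₀) := by
  set kinf : Fin P → ℝ := fun μ => Kinf x (X μ)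
  set w := kinf ᵥ* Ginf⁻¹
  have hGpd : Ginf.PosDef :=
    (hGinf ▸ hKinfpsd P X).posDef_iff_isUnit.2 ((isUnit_iff_isUnit_det Ginf).2 hGinv)
  have hw : w = Ginf⁻¹ *ᵥ kinf := by
    rw [← vecMul_transpose, transpose_nonsing_inv, ← conjTranspose_eq_transpose_of_trivial,
      hGpd.1.eq]
  have hwG : w ᵥ* Ginf = kinf := by rw [vecMul_vecMul, nonsing_inv_mul _ hGinv, vecMul_one]
  have hτmem : τ ∈ Icc 0 τ := right_mem_Icc.2 hτ
  refine ⟨f τ + w ⬝ᵥ Δ τ, tendsto_add_dotProduct_of_hasDerivAt hGpd hh hhtop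
    (continuousOn_Ici_of_hasDerivAt (hf1 τ hτmem) hf2)
    (continuousOn_Ici_of_hasDerivAt (hΔ1 τ hτmem) hΔ2) hΔ2 (by simpa only [hwG] using hf2), ?_⟩
  have herr := abs_sub_add_dotProduct_sub_le w hτ hε.le (fun t ht => hK₀psd t ht P X)
    (fun t ht => hk0max.2 ⟨t, ht, rfl⟩) (fun t ht => hkt0.2 ⟨t, ht, rfl⟩) hΔ1 hf1
  have hkt0_nonneg : 0 ≤ kt0 := (euclNorm_nonneg _).trans (hkt0.2 ⟨0, left_mem_Icc.2 hτ, rfl⟩)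
  have hk0_nonneg : 0 ≤ k0max := (norm_nonneg _).trans (hk0max.2 ⟨0, left_mem_Icc.2 hτ, rfl⟩)
  rw [sub_zero, hf0] at herr
  rw [dotProduct_mulVec, ← hw, ← hΔ0, show kinf ᵥ* Ginf⁻¹ = w from rfl]
  calc |f τ + w ⬝ᵥ Δ τ - f₀x - w ⬝ᵥ Δ 0| = |(f τ - f₀x) + w ⬝ᵥ (Δ τ - Δ 0)| := by
        rw [dotProduct_sub]
        congr 1
        ring
    _ ≤ _ := herr.trans (by
        nlinarith [mul_nonneg (mul_nonneg (mul_nonneg hε.le hτ) (mul_nonneg hε.le hτ))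
            (mul_nonneg (mul_nonneg hkt0_nonneg hk0_nonneg) (euclNorm_nonneg (Δ 0)))])

/-- silent alignment theorem: Suppose the training errors evolve with a small
positive semidefinite kernel `ε K₀(t,·,·)` on `[0,τ]` and with a fixed positive semidefinite
kernel `K∞` rescaled by `h'(t)` afterwards (`h` C¹, `h(τ)=0`, `h' ≥ 0`, `h → ∞`), with the
Gram matrix of `K∞` on the training points invertible, and a test prediction `f(x,t)` evolves
accordingly. Then `f(x,t)` converges as `t → ∞` and the limit equals the kernel regression
solution `f₀(x) + k∞(x)ᵀ K∞⁻¹ (y - f₀)` up to the stated `O(ε τ)` error bound. -/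
theorem stmt5 {D P : ℕ}
    (τ ε : ℝ) (hτ : 0 ≤ τ) (hε : 0 < ε)
    (K₀ : ℝ → (Fin D → ℝ) → (Fin D → ℝ) → ℝ)
    (hK₀cont : ContinuousOn (fun p : ℝ × (Fin D → ℝ) × (Fin D → ℝ) => K₀ p.1 p.2.1 p.2.2)
      (Set.Icc 0 τ ×ˢ (Set.univ ×ˢ Set.univ)))
    (hK₀psd : ∀ t ∈ Set.Icc (0 : ℝ) τ, ∀ (m : ℕ) (z : Fin m → Fin D → ℝ),
      Matrix.PosSemidef (Matrix.of fun i j => K₀ t (z i) (z j)))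
    (Kinf : (Fin D → ℝ) → (Fin D → ℝ) → ℝ)
    (hKinfpsd : ∀ (m : ℕ) (z : Fin m → Fin D → ℝ),
      Matrix.PosSemidef (Matrix.of fun i j => Kinf (z i) (z j)))
    (X : Fin P → Fin D → ℝ)
    (Ginf : Matrix (Fin P) (Fin P) ℝ)
    (hGinf : Ginf = Matrix.of fun μ ν => Kinf (X μ) (X ν))
    (hGinv : IsUnit Ginf.det)
    (y f₀ : Fin P → ℝ)
    (Δ : ℝ → Fin P → ℝ) (hΔ0 : Δ 0 = y - f₀)
    (h h' : ℝ → ℝ)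
    (hh : ∀ t ≥ τ, HasDerivAt h (h' t) t)
    (hh'cont : ContinuousOn h' (Set.Ici τ))
    (hhτ : h τ = 0)
    (hh'nonneg : ∀ t ≥ τ, 0 ≤ h' t)
    (hhtop : Tendsto h atTop atTop)
    (hΔ1 : ∀ t ∈ Set.Icc (0 : ℝ) τ,
      HasDerivAt Δ (-(ε • ((Matrix.of fun μ ν => K₀ t (X μ) (X ν)) *ᵥ Δ t))) t)
    (hΔ2 : ∀ t > τ, HasDerivAt Δ (-(h' t • (Ginf *ᵥ Δ t))) t)
    (x : Fin D → ℝ) (f : ℝ → ℝ) (f₀x : ℝ) (hf0 : f 0 = f₀x)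
    (hf1 : ∀ t ∈ Set.Icc (0 : ℝ) τ,
      HasDerivAt f (ε * ((fun μ => K₀ t x (X μ)) ⬝ᵥ Δ t)) t)
    (hf2 : ∀ t > τ, HasDerivAt f (h' t * ((fun μ => Kinf x (X μ)) ⬝ᵥ Δ t)) t)
    (k0max : ℝ)
    (hk0max : IsGreatest
      ((fun t => ‖(Matrix.of fun μ ν => K₀ t (X μ) (X ν) : Matrix (Fin P) (Fin P) ℝ)‖) ''
        Set.Icc (0 : ℝ) τ) k0max)
    (kt0 : ℝ)
    (hkt0 : IsGreatest
      ((fun t => euclNorm fun μ => K₀ t x (X μ)) '' Set.Icc (0 : ℝ) τ) kt0) :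
    ∃ flim : ℝ, Tendsto f atTop (nhds flim) ∧
      |flim - f₀x - (fun μ => Kinf x (X μ)) ⬝ᵥ (Ginf⁻¹ *ᵥ (y - f₀))| ≤
        ε * τ * (kt0 * (1 + ε * τ * k0max)
            + euclNorm (Ginf⁻¹ *ᵥ fun μ => Kinf x (X μ)) * k0max)
          * euclNorm (y - f₀) :=
  stmt5_general τ ε hτ hε K₀ hK₀psd Kinf hKinfpsd X Ginf hGinf hGinv y f₀ Δ hΔ0 h h' hh hhtop hΔ1
    hΔ2 x f f₀x hf0 hf1 hf2 k0max hk0max kt0 hkt0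
end

section
/- Consider a deep linear network f(x) = w^{L⊤} W^{L−1} ⋯ W^1 x with weight matrices W^ℓ ∈ ℝ^{N_{ℓ+1}×N_ℓ}, trained by gradient flow on any loss of the form 𝓛 = Σ_μ ℓ(f^μ, y^μ) with ℓ differentiable in its first argument, where f^μ = f(x^μ). Then for every layer ℓ ∈ {1,…,L−1}, the matrix W^ℓ(t) W^ℓ(t)ᵀ − W^{ℓ+1}(t)ᵀ W^{ℓ+1}(t) is conserved: d/dt [ W^ℓ W^{ℓ⊤} − W^{(ℓ+1)⊤} W^{ℓ+1} ] = 0 along the gradient flow. -/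
open Matrix
open scoped Matrix.Norms.L2Operator

namespace DeepLinear

variable (n : ℕ → ℕ) (L : ℕ)

/-- Forward pass (layer-`k` activation) of a deep linear network given by the chain of
matrices `W ℓ : ℝ^{n(ℓ+1) × n(ℓ)}`, `ℓ = 0, …, L-1`. -/
def fwd (W : ∀ ℓ : Fin L, Matrix (Fin (n (ℓ + 1))) (Fin (n ℓ)) ℝ)
    (x : Fin (n 0) → ℝ) : (k : ℕ) → k ≤ L → (Fin (n k) → ℝ)
  | 0, _ => x
  | k + 1, hk => W ⟨k, hk⟩ *ᵥ fwd W x k (Nat.le_of_succ_le hk)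

/-- Auxiliary downward recursion for the backward pass. -/
def bwdAux (W : ∀ ℓ : Fin L, Matrix (Fin (n (ℓ + 1))) (Fin (n ℓ)) ℝ)
    (v : Fin (n L) → ℝ) : (m k : ℕ) → k + m = L → (Fin (n k) → ℝ)
  | 0, k, h => fun i => v (Fin.cast (congrArg n h) i)
  | m + 1, k, h => (W ⟨k, by omega⟩)ᵀ *ᵥ bwdAux W v m (k + 1) (by omega)

/-- Backward pass: `(W^{L-1} ⋯ W^k)ᵀ v`, the gradient of `v ⬝ output` with respect to the
layer-`k` activation. -/
def bwd (W : ∀ ℓ : Fin L, Matrix (Fin (n (ℓ + 1))) (Fin (n ℓ)) ℝ)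
    (v : Fin (n L) → ℝ) (k : ℕ) (hk : k ≤ L) : Fin (n k) → ℝ :=
  bwdAux n L W v (L - k) k (by omega)

/-- Scalar network output (the network has a single output unit, `n L = 1`). -/
def netOut (W : ∀ ℓ : Fin L, Matrix (Fin (n (ℓ + 1))) (Fin (n ℓ)) ℝ)
    (x : Fin (n 0) → ℝ) : ℝ := ∑ i, fwd n L W x L le_rfl i

/-- Gradient of the scalar network output with respect to the layer-`ℓ` weight matrix:
`∂f(x)/∂W^ℓ = (backward vector at layer ℓ+1) (forward activation at layer ℓ)ᵀ`. -/
def netGrad (W : ∀ ℓ : Fin L, Matrix (Fin (n (ℓ + 1))) (Fin (n ℓ)) ℝ)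
    (x : Fin (n 0) → ℝ) (ℓ : Fin L) : Matrix (Fin (n (ℓ + 1))) (Fin (n ℓ)) ℝ :=
  vecMulVec (bwd n L W (fun _ => 1) (ℓ + 1) ℓ.isLt)
    (fwd n L W x ℓ (le_of_lt ℓ.isLt))

end DeepLinear

open DeepLinear

/-! Under gradient flow `Ẇ^ℓ = -∑_μ c_μ b_μ^{ℓ+1} a_μ^{ℓ⊤}`, with `a` the forward activations,
`b` the backward vectors and `c_μ = ∂ℓ(f^μ, y^μ)`. Since `a^{ℓ+1} = W^ℓ a^ℓ` and
`b^{ℓ+1} = W^{(ℓ+1)⊤} b^{ℓ+2}`, both `Ẇ^ℓ W^{ℓ⊤}` and `W^{(ℓ+1)⊤} Ẇ^{ℓ+1}` equal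
`-∑_μ c_μ b_μ^{ℓ+1} a_μ^{(ℓ+1)⊤} =: X`, so the derivative of `W^ℓ W^{ℓ⊤} - W^{(ℓ+1)⊤} W^{ℓ+1}`
is `(X + Xᵀ) - (Xᵀ + X) = 0`. -/

section MatrixCalculus

variable {𝕜 : Type*} [RCLike 𝕜] {l m n : Type*} [Fintype l] [Fintype m] [Fintype n]
  [DecidableEq m] [DecidableEq n]

noncomputable def Matrix.mulCLM :
    Matrix l m 𝕜 →L[𝕜] Matrix m n 𝕜 →L[𝕜] Matrix l n 𝕜 :=
  LinearMap.toContinuousLinearMap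
    (LinearMap.toContinuousLinearMap.toLinearMap ∘ₗ mulLinearMap 𝕜)

noncomputable def Matrix.transposeCLM : Matrix m n 𝕜 →L[𝕜] Matrix n m 𝕜 :=
  LinearMap.toContinuousLinearMap (Matrix.transposeLinearEquiv m n 𝕜 𝕜).toLinearMap

theorem HasDerivAt.matrix_mul {A : 𝕜 → Matrix l m 𝕜} {B : 𝕜 → Matrix m n 𝕜}
    {A' : Matrix l m 𝕜} {B' : Matrix m n 𝕜} {t : 𝕜}
    (hA : HasDerivAt A A' t) (hB : HasDerivAt B B' t) :
    HasDerivAt (fun s => A s * B s) (A' * B t + A t * B') t := by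
  rw [add_comm]
  exact Matrix.mulCLM.hasDerivAt_of_bilinear (fun _ => hA) (fun _ => hB)

theorem HasDerivAt.matrix_transpose {A : 𝕜 → Matrix m n 𝕜} {A' : Matrix m n 𝕜} {t : 𝕜}
    (hA : HasDerivAt A A' t) : HasDerivAt (fun s => (A s)ᵀ) A'ᵀ t :=
  (Matrix.transposeCLM (𝕜 := 𝕜) (m := m) (n := n)).hasFDerivAt.comp_hasDerivAt t hA

theorem hasDerivAt_mul_transpose_sub_transpose_mul_eq_zero {p : Type*} [Fintype p]
    [DecidableEq p] {A : 𝕜 → Matrix m n 𝕜} {B : 𝕜 → Matrix p m 𝕜} {A' : Matrix m n 𝕜}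
    {B' : Matrix p m 𝕜} {t : 𝕜} (hA : HasDerivAt A A' t) (hB : HasDerivAt B B' t)
    (hbal : A' * (A t)ᵀ = (B t)ᵀ * B') :
    HasDerivAt (fun s => A s * (A s)ᵀ - (B s)ᵀ * B s) 0 t := by
  have hAt : A t * A'ᵀ = (A' * (A t)ᵀ)ᵀ := by rw [transpose_mul, transpose_transpose]
  have hBt : B'ᵀ * B t = ((B t)ᵀ * B')ᵀ := by rw [transpose_mul, transpose_transpose]
  have hd := (hA.matrix_mul hA.matrix_transpose).sub (hB.matrix_transpose.matrix_mul hB)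
  rwa [hAt, hBt, hbal, add_comm, sub_self] at hd

end MatrixCalculus

namespace DeepLinear

variable {n : ℕ → ℕ} {L : ℕ} (W : ∀ ℓ : Fin L, Matrix (Fin (n (ℓ + 1))) (Fin (n ℓ)) ℝ)

theorem bwd_of_lt (v : Fin (n L) → ℝ) {k : ℕ} (hk : k < L) :
    bwd n L W v k hk.le = (W ⟨k, hk⟩)ᵀ *ᵥ bwd n L W v (k + 1) hk := by
  rw [bwd, bwd]
  rw! [show L - k = L - (k + 1) + 1 by omega]
  rfl

theorem netGrad_mul_transpose (x : Fin (n 0) → ℝ) {ℓ : ℕ} (hℓ : ℓ + 1 < L) :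
    netGrad n L W x ⟨ℓ, Nat.lt_of_succ_lt hℓ⟩ * (W ⟨ℓ, Nat.lt_of_succ_lt hℓ⟩)ᵀ
      = (W ⟨ℓ + 1, hℓ⟩)ᵀ * netGrad n L W x ⟨ℓ + 1, hℓ⟩ := by
  rw [netGrad, netGrad, vecMulVec_mul, vecMul_transpose, mul_vecMulVec]
  exact congrArg₂ vecMulVec (bwd_of_lt W _ hℓ) rfl

end DeepLinear

theorem stmt8_general {L : ℕ} (n : ℕ → ℕ)
    {P : ℕ} (x : Fin P → Fin (n 0) → ℝ) (y : Fin P → ℝ)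
    (dloss : ℝ → ℝ → ℝ)
    (W : ℝ → ∀ ℓ : Fin L, Matrix (Fin (n (ℓ + 1))) (Fin (n ℓ)) ℝ)
    (hGF : ∀ t (ℓ : Fin L), HasDerivAt (fun t => W t ℓ)
      (-(∑ μ, dloss (netOut n L (W t) (x μ)) (y μ) • netGrad n L (W t) (x μ) ℓ)) t) :
    ∀ (ℓ : ℕ) (hℓ : ℓ + 1 < L) (t : ℝ),
      HasDerivAt (fun t =>
          W t ⟨ℓ, Nat.lt_of_succ_lt hℓ⟩ * (W t ⟨ℓ, Nat.lt_of_succ_lt hℓ⟩)ᵀ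
            - (W t ⟨ℓ + 1, hℓ⟩)ᵀ * W t ⟨ℓ + 1, hℓ⟩)
        (0 : Matrix (Fin (n (ℓ + 1))) (Fin (n (ℓ + 1))) ℝ) t := by
  intro ℓ hℓ t
  refine hasDerivAt_mul_transpose_sub_transpose_mul_eq_zero (hGF t _) (hGF t _) ?_
  simp only [Matrix.neg_mul, Matrix.mul_neg, Matrix.sum_mul, Matrix.mul_sum, Matrix.smul_mul,
    Matrix.mul_smul, netGrad_mul_transpose (W t) _ hℓ]

/-- For a deep linear network `f(x) = w^{L⊤} W^{L-1} ⋯ W^1 x` (encoded as a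
chain of `L` matrices whose last one is the row vector `w^{L⊤}`, i.e. `n L = 1`) trained by
gradient flow on any loss `𝓛 = ∑_μ ℓ(f^μ, y^μ)` with `ℓ` differentiable in its first
argument, the matrix `W^ℓ W^{ℓ⊤} − W^{(ℓ+1)⊤} W^{ℓ+1}` is conserved for every adjacent pair
of layers. -/
theorem stmt8 {L : ℕ} (hL : 0 < L) (n : ℕ → ℕ) (htop : n L = 1)
    {P : ℕ} (x : Fin P → Fin (n 0) → ℝ) (y : Fin P → ℝ)
    (loss dloss : ℝ → ℝ → ℝ)
    (hdl : ∀ z w : ℝ, HasDerivAt (fun u => loss u w) (dloss z w) z)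
    (W : ℝ → ∀ ℓ : Fin L, Matrix (Fin (n (ℓ + 1))) (Fin (n ℓ)) ℝ)
    (hGF : ∀ t (ℓ : Fin L), HasDerivAt (fun t => W t ℓ)
      (-(∑ μ, dloss (netOut n L (W t) (x μ)) (y μ) • netGrad n L (W t) (x μ) ℓ)) t) :
    ∀ (ℓ : ℕ) (hℓ : ℓ + 1 < L) (t : ℝ),
      HasDerivAt (fun t =>
          W t ⟨ℓ, Nat.lt_of_succ_lt hℓ⟩ * (W t ⟨ℓ, Nat.lt_of_succ_lt hℓ⟩)ᵀ
            - (W t ⟨ℓ + 1, hℓ⟩)ᵀ * W t ⟨ℓ + 1, hℓ⟩)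
        (0 : Matrix (Fin (n (ℓ + 1))) (Fin (n (ℓ + 1))) ℝ) t :=
  stmt8_general n x y dloss W hGF
end
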